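/- Let d ≥ 1, λ₁ ≠ 0, z ∈ ℝ^d, and set f_z(ω) = cos(⟨ω, z⟩) and Q = Q^{(1,d)}(f_z). If ω ∼ γ_d, then E_ω[(M^{(1,d)}(f_z, ω))²] = 1 + ((d+2)/d)·(Q − 1)² + 2(Q − 1). In particular this value does not depend on λ₁ except through Q. -/

import Mathlib

open MeasureTheory ProbabilityTheory Real
open scoped RealInnerProductSpace

/-- The standard Gaussian measure `N(0, I_d)` on `ℝ^d`,
the `d`-fold product of the standard normal distribution. -/
noncomputable def stdGaussian (d : ℕ) : Measure (EuclideanSpace ℝ (Fin d)) :=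
  (Measure.pi fun _ : Fin d => gaussianReal 0 1).map (MeasurableEquiv.toLp 2 (Fin d → ℝ))

/-- The third-degree fully symmetric interpolatory rule with generator `l ≠ 0`:
`Q^{(1,d)}(f) = (1 - d/l²)·f(0) + (1/(2l²))·∑ᵢ [f(l eᵢ) + f(-l eᵢ)]`. -/
noncomputable def Q1 (d : ℕ) (l : ℝ) (f : EuclideanSpace ℝ (Fin d) → ℝ) : ℝ :=
  (1 - d / l ^ 2) * f 0
    + (1 / (2 * l ^ 2)) * ∑ i : Fin d,
        (f (EuclideanSpace.single i l) + f (-EuclideanSpace.single i l))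

/-- The randomized third-degree rule `M^{(1,d)}(f, ω)` with random weights
`ã₀(ω) = 1 - (∑ᵢ ωᵢ²)/l²` and `ã₁(ω) = (∑ᵢ ωᵢ²)/(2dl²)`. -/
noncomputable def M1 (d : ℕ) (l : ℝ) (f : EuclideanSpace ℝ (Fin d) → ℝ)
    (ω : EuclideanSpace ℝ (Fin d)) : ℝ :=
  (1 - (∑ i, ω i ^ 2) / l ^ 2) * f 0
    + ((∑ i, ω i ^ 2) / (2 * d * l ^ 2)) * ∑ i : Fin d,
        (f (EuclideanSpace.single i l) + f (-EuclideanSpace.single i l))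

/-! Since `f_z(0) = 1`, the randomized rule is affine in `S(ω) = ∑ᵢ ωᵢ²`, namely
`M^{(1,d)}(f_z, ω) = 1 + c S(ω)` with `c = (Q - 1)/d`. Hence its second moment is
`c² Var S + (1 + c E S)²`. Under `γ_d`, `S` is a sum of `d` independent copies of `X²` with
`X ∼ N(0,1)`, so `E S = d` and `Var S = d (E X⁴ - (E X²)²) = 2d`; the Gaussian moments
`E X² = 1`, `E X⁴ = 3` come from the integration by parts `E X^(n+2) = (n+1) E X^n`. -/

lemma integrable_pow_mul_exp_neg_sq_div_two (n : ℕ) :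
    Integrable fun x : ℝ => x ^ n * exp (-x ^ 2 / 2) := by
  have h := integrable_rpow_mul_exp_neg_mul_sq (b := 1 / 2) (by norm_num) (s := n)
    (by linarith [(Nat.cast_nonneg n : (0 : ℝ) ≤ n)])
  refine h.congr (ae_of_all _ fun x => ?_)
  simp only [Real.rpow_natCast]
  ring_nf

/-- Integrate the derivative of `x ^ (n + 1) * exp (-x ^ 2 / 2)` over `ℝ`. -/
lemma integral_pow_add_two_mul_exp_neg_sq_div_two (n : ℕ) :
    ∫ x : ℝ, x ^ (n + 2) * exp (-x ^ 2 / 2) = (n + 1) * ∫ x : ℝ, x ^ n * exp (-x ^ 2 / 2) := by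
  have hderiv : ∀ x : ℝ, HasDerivAt (fun x : ℝ => x ^ (n + 1) * exp (-x ^ 2 / 2))
      ((n + 1) * (x ^ n * exp (-x ^ 2 / 2)) - x ^ (n + 2) * exp (-x ^ 2 / 2)) x := by
    intro x
    have hquad : HasDerivAt (fun x : ℝ => -x ^ 2 / 2) (-x) x :=
      ((hasDerivAt_pow 2 x).neg.div_const 2).congr_deriv (by ring)
    refine ((hasDerivAt_pow (n + 1) x).mul hquad.exp).congr_deriv ?_
    push_cast
    ring
  have h := integral_eq_zero_of_hasDerivAt_of_integrable hderiv
    (((integrable_pow_mul_exp_neg_sq_div_two n).const_mul _).sub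
      (integrable_pow_mul_exp_neg_sq_div_two (n + 2)))
    (integrable_pow_mul_exp_neg_sq_div_two (n + 1))
  rw [integral_sub ((integrable_pow_mul_exp_neg_sq_div_two n).const_mul _)
    (integrable_pow_mul_exp_neg_sq_div_two (n + 2)), integral_const_mul] at h
  linarith

lemma integral_gaussianReal_zero_one (g : ℝ → ℝ) :
    ∫ x, g x ∂gaussianReal 0 1 = (√(2 * π))⁻¹ * ∫ x, g x * exp (-x ^ 2 / 2) := by
  rw [integral_gaussianReal_eq_integral_smul one_ne_zero, ← integral_const_mul]
  simp only [gaussianPDFReal, smul_eq_mul, NNReal.coe_one, mul_one, sub_zero]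
  congr 1 with x
  ring

lemma integral_pow_add_two_gaussianReal (n : ℕ) :
    ∫ x, x ^ (n + 2) ∂gaussianReal 0 1 = (n + 1) * ∫ x, x ^ n ∂gaussianReal 0 1 := by
  rw [integral_gaussianReal_zero_one, integral_gaussianReal_zero_one,
    integral_pow_add_two_mul_exp_neg_sq_div_two]
  ring

lemma integral_sq_gaussianReal : ∫ x, x ^ 2 ∂gaussianReal 0 1 = 1 := by
  simpa using integral_pow_add_two_gaussianReal 0

lemma integral_pow_four_gaussianReal : ∫ x, x ^ 4 ∂gaussianReal 0 1 = 3 := by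
  rw [integral_pow_add_two_gaussianReal 2, integral_sq_gaussianReal]
  norm_num

lemma memLp_sq_gaussianReal : MemLp (fun x : ℝ => x ^ 2) 2 (gaussianReal 0 1) := by
  refine (memLp_two_iff_integrable_sq (by fun_prop)).2 ?_
  have h := (memLp_id_gaussianReal (μ := 0) (v := 1) 4).integrable_norm_pow'
  refine h.congr (ae_of_all _ fun x => ?_)
  simp [← pow_mul, Even.pow_abs ⟨2, rfl⟩]

lemma variance_sq_gaussianReal : Var[fun x : ℝ => x ^ 2; gaussianReal 0 1] = 2 := by
  rw [variance_eq_sub memLp_sq_gaussianReal]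
  simp only [Pi.pow_apply, ← pow_mul, integral_pow_four_gaussianReal, integral_sq_gaussianReal]
  norm_num

section SumOfSquares

variable {Ω : Type*} {mΩ : MeasurableSpace Ω} {P : Measure Ω} [IsProbabilityMeasure P]

lemma integral_sq_const_add_mul {Y : Ω → ℝ} (hY : MemLp Y 2 P) (a c : ℝ) :
    ∫ ω, (a + c * Y ω) ^ 2 ∂P = c ^ 2 * Var[Y; P] + (a + c * ∫ ω, Y ω ∂P) ^ 2 := by
  have hZ : MemLp (fun ω => a + c * Y ω) 2 P := (memLp_const a).add (hY.const_mul c)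
  have h := variance_eq_sub hZ
  rw [variance_const_add (hY.const_mul c).aestronglyMeasurable, variance_const_mul,
    integral_add (integrable_const a) ((hY.integrable one_le_two).const_mul c),
    integral_const_mul] at h
  simp only [Pi.pow_apply, integral_const, probReal_univ, smul_eq_mul, one_mul] at h
  linarith

variable {ι : Type*} [Fintype ι] {μ : Measure ℝ} [IsProbabilityMeasure μ]

lemma integral_sum_sq_pi (h : Integrable (fun x : ℝ => x ^ 2) μ) :
    ∫ x : ι → ℝ, ∑ i, x i ^ 2 ∂Measure.pi (fun _ => μ) = Fintype.card ι * ∫ x, x ^ 2 ∂μ := by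
  rw [integral_finsetSum _ fun i _ => integrable_comp_eval (μ := fun _ => μ) (i := i) h]
  simp [integral_comp_eval (μ := fun _ : ι => μ) (f := fun x : ℝ => x ^ 2) h.aestronglyMeasurable]

lemma variance_sum_sq_pi (h : MemLp (fun x : ℝ => x ^ 2) 2 μ) :
    Var[fun x : ι → ℝ => ∑ i, x i ^ 2; Measure.pi fun _ => μ]
      = Fintype.card ι * Var[fun x : ℝ => x ^ 2; μ] := by
  have h := variance_sum_pi (X := fun (_ : ι) (x : ℝ) => x ^ 2) fun _ => h
  simpa [Finset.sum_fn] using h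

lemma memLp_sum_sq_pi (h : MemLp (fun x : ℝ => x ^ 2) 2 μ) :
    MemLp (fun x : ι → ℝ => ∑ i, x i ^ 2) 2 (Measure.pi fun _ => μ) :=
  memLp_finsetSum _ fun i _ => h.comp_measurePreserving (measurePreserving_eval _ i)

lemma integral_sq_const_add_mul_sum_sq_pi (h : MemLp (fun x : ℝ => x ^ 2) 2 μ) (a c : ℝ) :
    ∫ x : ι → ℝ, (a + c * ∑ i, x i ^ 2) ^ 2 ∂Measure.pi (fun _ => μ)
      = c ^ 2 * (Fintype.card ι * Var[fun x : ℝ => x ^ 2; μ])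
        + (a + c * (Fintype.card ι * ∫ x, x ^ 2 ∂μ)) ^ 2 := by
  rw [integral_sq_const_add_mul (memLp_sum_sq_pi h), variance_sum_sq_pi h,
    integral_sum_sq_pi (h.integrable one_le_two)]

end SumOfSquares

lemma M1_eq_add_mul_sum_sq {d : ℕ} (hd : d ≠ 0) (l : ℝ) (f : EuclideanSpace ℝ (Fin d) → ℝ)
    (ω : EuclideanSpace ℝ (Fin d)) :
    M1 d l f ω = f 0 + (Q1 d l f - f 0) / d * ∑ i, ω i ^ 2 := by
  have hd' : (d : ℝ) ≠ 0 := Nat.cast_ne_zero.2 hd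
  unfold M1 Q1
  field_simp
  ring

theorem second_moment_M1_general (d : ℕ) (hd : 1 ≤ d) (l : ℝ)
    (z : EuclideanSpace ℝ (Fin d)) :
    ∫ ω, (M1 d l (fun w => Real.cos ⟪w, z⟫) ω) ^ 2 ∂(stdGaussian d)
      = 1 + ((d + 2) / d) * (Q1 d l (fun w => Real.cos ⟪w, z⟫) - 1) ^ 2
          + 2 * (Q1 d l (fun w => Real.cos ⟪w, z⟫) - 1) := by
  have hd0 : d ≠ 0 := by omega
  set Q := Q1 d l (fun w => Real.cos ⟪w, z⟫)
  have hM (ω) : M1 d l (fun w => Real.cos ⟪w, z⟫) ω = 1 + (Q - 1) / d * ∑ i, ω i ^ 2 := by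
    simpa using M1_eq_add_mul_sum_sq hd0 l (fun w => Real.cos ⟪w, z⟫) ω
  calc _ = ∫ x : Fin d → ℝ, (1 + (Q - 1) / d * ∑ i, x i ^ 2) ^ 2
          ∂Measure.pi fun _ => gaussianReal 0 1 := by
        rw [_root_.stdGaussian, integral_map_equiv]
        simp only [hM]
        rfl
    _ = ((Q - 1) / d) ^ 2 * (d * 2) + (1 + (Q - 1) / d * (d * 1)) ^ 2 := by
        rw [integral_sq_const_add_mul_sum_sq_pi memLp_sq_gaussianReal, variance_sq_gaussianReal,
          integral_sq_gaussianReal, Fintype.card_fin]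
    _ = _ := by
        field_simp
        ring

/-- second moment of the randomized rule for `f_z(ω) = cos⟨ω, z⟩`:
`E_ω[(M^{(1,d)}(f_z, ω))²] = 1 + ((d+2)/d)·(Q-1)² + 2(Q-1)` with `Q = Q^{(1,d)}(f_z)`. -/
theorem second_moment_M1 (d : ℕ) (hd : 1 ≤ d) (l : ℝ) (hl : l ≠ 0)
    (z : EuclideanSpace ℝ (Fin d)) :
    ∫ ω, (M1 d l (fun w => Real.cos ⟪w, z⟫) ω) ^ 2 ∂(stdGaussian d)
      = 1 + ((d + 2) / d) * (Q1 d l (fun w => Real.cos ⟪w, z⟫) - 1) ^ 2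
          + 2 * (Q1 d l (fun w => Real.cos ⟪w, z⟫) - 1) :=
  second_moment_M1_general d hd l z
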